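/- Suppose in addition that λ > 0 with GᵀG ⪰ λI (positive semidefinite ordering on ℝ^{m×m}), κ_{∇c} > 0 with ‖G‖₂ ≤ κ_{∇c} (spectral norm), κ_c > 0 with ‖b‖ ≤ κ_c, κ_g > 0 with ‖g‖ ≤ κ_g, and ζ > 0, κ_H > 0 with ζI ⪯ H ⪯ κ_H I. Let (u,w) be the unique optimal solution of subproblem (V), v := u + Gw, and let d be the optimal solution of subproblem (D). Then gᵀd + (1/2)dᵀHd ≤ κ_{g,H} ‖v‖, where κ_{g,H} := κ_g + (1/2)κ_H · √(4κ_{∇c}²/λ² + 1/μ) · κ_c. -/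

import Mathlib

open Matrix

/-- Euclidean norm of a vector in `ℝᵏ` (represented as `Fin k → ℝ`). -/
noncomputable def nrm2 {k : ℕ} (a : Fin k → ℝ) : ℝ := Real.sqrt (∑ i, (a i) ^ 2)

lemma nrm2_nonneg {k : ℕ} (a : Fin k → ℝ) : 0 ≤ nrm2 a := Real.sqrt_nonneg _

lemma nrm2_sq {k : ℕ} (a : Fin k → ℝ) : nrm2 a ^ 2 = ∑ i, (a i) ^ 2 :=
  Real.sq_sqrt (Finset.sum_nonneg fun _ _ => sq_nonneg _)

lemma dot_le_nrm2 {k : ℕ} (a c : Fin k → ℝ) : a ⬝ᵥ c ≤ nrm2 a * nrm2 c := by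
  simpa [dotProduct, nrm2] using Real.sum_mul_le_sqrt_mul_sqrt Finset.univ a c

lemma nrm2_sq_eq_dot {k : ℕ} (a : Fin k → ℝ) : nrm2 a ^ 2 = a ⬝ᵥ a := by
  rw [nrm2_sq]; simp [dotProduct, sq]

lemma pythag {k : ℕ} (a c : Fin k → ℝ) (h : a ⬝ᵥ c = 0) :
    nrm2 (a + c) ^ 2 = nrm2 a ^ 2 + nrm2 c ^ 2 := by
  simp only [nrm2_sq_eq_dot]
  have : (a + c) ⬝ᵥ (a + c) = a ⬝ᵥ a + 2 * (a ⬝ᵥ c) + c ⬝ᵥ c := by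
    simp [add_dotProduct, dotProduct_add, dotProduct_comm c a]; ring
  rw [this, h]; ring

lemma nrm2_le_of_sq_le_sq {k : ℕ} (a : Fin k → ℝ) {t : ℝ} (ht : 0 ≤ t)
    (h : nrm2 a ^ 2 ≤ t ^ 2) : nrm2 a ≤ t := by
  nlinarith [nrm2_nonneg a]

lemma nrm2_zero {k : ℕ} : nrm2 (0 : Fin k → ℝ) = 0 := by simp [nrm2]

lemma nrm2_triangle {k : ℕ} (a c : Fin k → ℝ) : nrm2 (a + c) ≤ nrm2 a + nrm2 c := by
  refine nrm2_le_of_sq_le_sq _ (add_nonneg (nrm2_nonneg a) (nrm2_nonneg c)) ?_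
  have h1 : nrm2 (a + c) ^ 2 = (a + c) ⬝ᵥ (a + c) := nrm2_sq_eq_dot _
  have h2 : (a + c) ⬝ᵥ (a + c) = a ⬝ᵥ a + 2 * (a ⬝ᵥ c) + c ⬝ᵥ c := by
    simp [add_dotProduct, dotProduct_add, dotProduct_comm c a]; ring
  nlinarith [dot_le_nrm2 a c, nrm2_sq_eq_dot a, nrm2_sq_eq_dot c]

/-- Feasibility for subproblem (V): `Gᵀu = 0` and `x + u + Gw ≥ 0`. -/
def feasV {n m : ℕ} (G : Matrix (Fin n) (Fin m) ℝ) (x : Fin n → ℝ)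
    (p : (Fin n → ℝ) × (Fin m → ℝ)) : Prop :=
  Gᵀ *ᵥ p.1 = 0 ∧ 0 ≤ x + p.1 + G *ᵥ p.2

/-- Objective of subproblem (V): `(1/2)‖b + GᵀG w‖² + (1/2)μ‖u‖²`. -/
noncomputable def objV {n m : ℕ} (G : Matrix (Fin n) (Fin m) ℝ) (b : Fin m → ℝ) (μ : ℝ)
    (p : (Fin n → ℝ) × (Fin m → ℝ)) : ℝ :=
  (1 / 2) * nrm2 (b + Gᵀ *ᵥ (G *ᵥ p.2)) ^ 2 + (1 / 2) * μ * nrm2 p.1 ^ 2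

/-- Feasibility for subproblem (D): `Gᵀd = Gᵀv` and `x + d ≥ 0`. -/
def feasD {n m : ℕ} (G : Matrix (Fin n) (Fin m) ℝ) (x v d : Fin n → ℝ) : Prop :=
  Gᵀ *ᵥ d = Gᵀ *ᵥ v ∧ 0 ≤ x + d

/-- Objective of subproblem (D): `gᵀd + (1/2)dᵀHd`. -/
noncomputable def objD {n : ℕ} (g : Fin n → ℝ) (H : Matrix (Fin n) (Fin n) ℝ)
    (d : Fin n → ℝ) : ℝ :=
  g ⬝ᵥ d + (1 / 2) * (d ⬝ᵥ (H *ᵥ d))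

/-- Bound on the quadratic of the tangential subproblem: with `v := u + Gw`,
`gᵀd + (1/2)dᵀHd ≤ κ_{g,H}‖v‖`, where
`κ_{g,H} = κ_g + (1/2)κ_H·√(4κ∇c²/λ² + 1/μ)·κ_c`. -/
theorem tangential_quadratic_upper_bound
    {n m : ℕ} (G : Matrix (Fin n) (Fin m) ℝ) (b : Fin m → ℝ)
    (x : Fin n → ℝ) (μ : ℝ) (hx : 0 ≤ x) (hμ : 0 < μ)
    (hrank : Function.Injective G.mulVec)
    (lam : ℝ) (hlam : 0 < lam)
    (hGG : (Gᵀ * G - lam • (1 : Matrix (Fin m) (Fin m) ℝ)).PosSemidef)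
    (κgc : ℝ) (hκgc : 0 < κgc) (hGnorm : ∀ z : Fin m → ℝ, nrm2 (G *ᵥ z) ≤ κgc * nrm2 z)
    (κc : ℝ) (hκc : 0 < κc) (hb : nrm2 b ≤ κc)
    (g : Fin n → ℝ) (κg : ℝ) (hκg : 0 < κg) (hg : nrm2 g ≤ κg)
    (H : Matrix (Fin n) (Fin n) ℝ) (hH : H.PosDef)
    (ζ κH : ℝ) (hζ : 0 < ζ) (hκH : 0 < κH)
    (hHζ : (H - ζ • (1 : Matrix (Fin n) (Fin n) ℝ)).PosSemidef)
    (hHκ : ((κH • (1 : Matrix (Fin n) (Fin n) ℝ)) - H).PosSemidef)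
    (u : Fin n → ℝ) (w : Fin m → ℝ)
    (hfeasV : feasV G x (u, w))
    (hoptV : ∀ q, feasV G x q → objV G b μ (u, w) ≤ objV G b μ q)
    (d : Fin n → ℝ)
    (hfeasD : feasD G x (u + G *ᵥ w) d)
    (hoptD : ∀ d', feasD G x (u + G *ᵥ w) d' → objD g H d ≤ objD g H d') :
    g ⬝ᵥ d + (1 / 2) * (d ⬝ᵥ (H *ᵥ d)) ≤
      (κg + (1 / 2) * κH * (Real.sqrt (4 * κgc ^ 2 / lam ^ 2 + 1 / μ) * κc))
        * nrm2 (u + G *ᵥ w) := by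
  set v : Fin n → ℝ := u + G *ᵥ w with hv_def
  -- orthogonality
  have hperp : u ⬝ᵥ (G *ᵥ w) = 0 := by
    rw [dotProduct_mulVec, ← mulVec_transpose, hfeasV.1, zero_dotProduct]
  -- compare with (0,0) in (V)
  have hfeas0 : feasV G x ((0 : Fin n → ℝ), (0 : Fin m → ℝ)) := by
    constructor
    · simp [mulVec_zero]
    · simpa [mulVec_zero] using hx
  have hV0 := hoptV ((0 : Fin n → ℝ), (0 : Fin m → ℝ)) hfeas0
  have hV0' : (1 / 2) * nrm2 (b + Gᵀ *ᵥ (G *ᵥ w)) ^ 2 + (1 / 2) * μ * nrm2 u ^ 2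
      ≤ (1 / 2) * nrm2 b ^ 2 := by
    simpa [objV, mulVec_zero, nrm2_zero] using hV0
  have hbnn : (0:ℝ) ≤ nrm2 b := nrm2_nonneg b
  have hu2 : μ * nrm2 u ^ 2 ≤ nrm2 b ^ 2 := by nlinarith [sq_nonneg (nrm2 (b + Gᵀ *ᵥ (G *ᵥ w)))]
  have hbw : nrm2 (b + Gᵀ *ᵥ (G *ᵥ w)) ≤ nrm2 b := by
    refine nrm2_le_of_sq_le_sq _ hbnn ?_
    nlinarith [sq_nonneg (nrm2 u), hμ.le, mul_nonneg hμ.le (sq_nonneg (nrm2 u))]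
  -- bound on GᵀGw
  have hGGw2 : nrm2 (Gᵀ *ᵥ (G *ᵥ w)) ≤ 2 * nrm2 b := by
    have h1 : Gᵀ *ᵥ (G *ᵥ w) = (b + Gᵀ *ᵥ (G *ᵥ w)) + (-b) := by ring_nf
    have h2 : nrm2 (-b) = nrm2 b := by simp [nrm2]
    calc nrm2 (Gᵀ *ᵥ (G *ᵥ w)) = nrm2 ((b + Gᵀ *ᵥ (G *ᵥ w)) + (-b)) := by rw [← h1]
      _ ≤ nrm2 (b + Gᵀ *ᵥ (G *ᵥ w)) + nrm2 (-b) := nrm2_triangle _ _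
      _ ≤ 2 * nrm2 b := by rw [h2]; linarith
  -- lam ‖w‖ ≤ ‖GᵀGw‖
  have hlw : lam * nrm2 w ≤ nrm2 (Gᵀ *ᵥ (G *ᵥ w)) := by
    have h0 := hGG.dotProduct_mulVec_nonneg w
    have hst : star w = w := rfl
    rw [hst, sub_mulVec, dotProduct_sub, smul_mulVec, one_mulVec,
      dotProduct_smul, ← mulVec_mulVec] at h0
    have h1 : lam * (w ⬝ᵥ w) ≤ w ⬝ᵥ (Gᵀ *ᵥ (G *ᵥ w)) := by
      simpa [smul_eq_mul] using sub_nonneg.mp h0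
    have h2 := dot_le_nrm2 w (Gᵀ *ᵥ (G *ᵥ w))
    have h3 : lam * nrm2 w ^ 2 ≤ nrm2 w * nrm2 (Gᵀ *ᵥ (G *ᵥ w)) := by
      rw [nrm2_sq_eq_dot]; linarith
    rcases eq_or_lt_of_le (nrm2_nonneg w) with hw0 | hw0
    · rw [← hw0]; simpa using nrm2_nonneg (Gᵀ *ᵥ (G *ᵥ w))
    · have := mul_le_mul_of_nonneg_left h3 (le_of_lt (inv_pos.mpr hw0))
      rw [sq] at this
      calc lam * nrm2 w = (nrm2 w)⁻¹ * (lam * (nrm2 w * nrm2 w)) := by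
            field_simp
        _ ≤ (nrm2 w)⁻¹ * (nrm2 w * nrm2 (Gᵀ *ᵥ (G *ᵥ w))) := this
        _ = nrm2 (Gᵀ *ᵥ (G *ᵥ w)) := by field_simp
  have hw : nrm2 w ≤ 2 * nrm2 b / lam := by
    rw [le_div_iff₀ hlam]; nlinarith
  have hGw : nrm2 (G *ᵥ w) ≤ κgc * (2 * nrm2 b / lam) :=
    le_trans (hGnorm w) (by nlinarith [nrm2_nonneg w])
  -- bound on ‖v‖
  have hb2 : nrm2 b ^ 2 ≤ κc ^ 2 := pow_le_pow_left₀ hbnn hb 2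
  have hv2 : nrm2 v ^ 2 ≤ (4 * κgc ^ 2 / lam ^ 2 + 1 / μ) * κc ^ 2 := by
    have hp := pythag u (G *ᵥ w) hperp
    have h1 : nrm2 u ^ 2 ≤ nrm2 b ^ 2 / μ := by
      rw [le_div_iff₀ hμ]; linarith
    have h2 : nrm2 (G *ᵥ w) ^ 2 ≤ (κgc * (2 * nrm2 b / lam)) ^ 2 :=
      pow_le_pow_left₀ (nrm2_nonneg _) hGw 2
    have h3 : (κgc * (2 * nrm2 b / lam)) ^ 2 = 4 * κgc ^ 2 / lam ^ 2 * nrm2 b ^ 2 := by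
      field_simp; ring
    rw [hv_def, hp]
    have h4 : 4 * κgc ^ 2 / lam ^ 2 * nrm2 b ^ 2 ≤ 4 * κgc ^ 2 / lam ^ 2 * κc ^ 2 :=
      mul_le_mul_of_nonneg_left hb2 (by positivity)
    have h5 : nrm2 b ^ 2 / μ ≤ κc ^ 2 / μ := by gcongr
    calc nrm2 u ^ 2 + nrm2 (G *ᵥ w) ^ 2
        ≤ 4 * κgc ^ 2 / lam ^ 2 * κc ^ 2 + κc ^ 2 / μ := by linarith
      _ = (4 * κgc ^ 2 / lam ^ 2 + 1 / μ) * κc ^ 2 := by ring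
  have hsq : (0:ℝ) ≤ 4 * κgc ^ 2 / lam ^ 2 + 1 / μ := by positivity
  have hvbound : nrm2 v ≤ Real.sqrt (4 * κgc ^ 2 / lam ^ 2 + 1 / μ) * κc := by
    refine nrm2_le_of_sq_le_sq _ (by positivity) ?_
    rw [mul_pow, Real.sq_sqrt hsq]
    exact hv2
  -- d vs v
  have hfeasDv : feasD G x v v := ⟨rfl, by simpa [add_assoc] using hfeasV.2⟩
  have hdv : objD g H d ≤ objD g H v := hoptD v hfeasDv
  -- bound objD v
  have hgv : g ⬝ᵥ v ≤ κg * nrm2 v :=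
    le_trans (dot_le_nrm2 g v) (mul_le_mul_of_nonneg_right hg (nrm2_nonneg v))
  have hHv : v ⬝ᵥ (H *ᵥ v) ≤ κH * nrm2 v ^ 2 := by
    have h0 := hHκ.dotProduct_mulVec_nonneg v
    have hst : star v = v := rfl
    rw [hst, sub_mulVec, dotProduct_sub, smul_mulVec, one_mulVec,
      dotProduct_smul] at h0
    rw [nrm2_sq_eq_dot]
    simpa [smul_eq_mul] using sub_nonneg.mp h0
  have hvnn : (0:ℝ) ≤ nrm2 v := nrm2_nonneg v
  have hfinal : objD g H v ≤
      (κg + (1 / 2) * κH * (Real.sqrt (4 * κgc ^ 2 / lam ^ 2 + 1 / μ) * κc)) * nrm2 v := by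
    unfold objD
    have hs : nrm2 v ^ 2 ≤ (Real.sqrt (4 * κgc ^ 2 / lam ^ 2 + 1 / μ) * κc) * nrm2 v := by
      rw [sq]; exact mul_le_mul_of_nonneg_right hvbound hvnn
    have h1 : (1/2) * κH * nrm2 v ^ 2 ≤
        (1/2) * κH * ((Real.sqrt (4 * κgc ^ 2 / lam ^ 2 + 1 / μ) * κc) * nrm2 v) :=
      mul_le_mul_of_nonneg_left hs (by positivity)
    have h2 : (1/2) * (v ⬝ᵥ (H *ᵥ v)) ≤ (1/2) * κH * nrm2 v ^ 2 := by linarith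
    have hge : g ⬝ᵥ v ≤ κg * nrm2 v := hgv
    calc g ⬝ᵥ v + 1 / 2 * (v ⬝ᵥ (H *ᵥ v))
        ≤ κg * nrm2 v + (1/2) * κH * ((Real.sqrt (4 * κgc ^ 2 / lam ^ 2 + 1 / μ) * κc) * nrm2 v) := by
          linarith
      _ = (κg + 1 / 2 * κH * (Real.sqrt (4 * κgc ^ 2 / lam ^ 2 + 1 / μ) * κc)) * nrm2 v := by
          ring
  calc g ⬝ᵥ d + (1 / 2) * (d ⬝ᵥ (H *ᵥ d)) = objD g H d := rfl
    _ ≤ objD g H v := hdv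
    _ ≤ _ := hfinal
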